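/- arXiv:1211.4327 — 8 statements merged into one kernel-verified Lean document; each statement's English description precedes it below -/
import Mathlib

section
/- Let K be a field of characteristic 0 and R = K[x_1,...,x_n]. If f ∈ R is a squarefree product f = f_1 ⋯ f_k of pairwise coprime factors, then a derivation D of R satisfies D(f) ∈ (f) if and only if D(f_i) ∈ (f_i) for every i = 1,...,k. -/
/-!
By the Leibniz rule, `D (∏ j, f j) = ∑ i, (∏ j ≠ i, f j) • D (f i)`. Modulo `f i` only the
`i`-th summand survives, and since `f i` is coprime to `∏ j ≠ i, f j` it divides that summand
exactly when it divides `D (f i)`.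
-/

open Function

namespace Derivation

section Prod

variable {A R M : Type*} [CommSemiring A] [CommSemiring R] [AddCommMonoid M] [Algebra A R]
  [Module A M] [Module R M] {ι : Type*} [DecidableEq ι]

theorem map_prod_eq_sum (D : Derivation A R M) (s : Finset ι) (f : ι → R) :
    D (∏ i ∈ s, f i) = ∑ i ∈ s, (∏ j ∈ s.erase i, f j) • D (f i) := by
  induction s using Finset.induction_on with
  | empty => simp
  | insert a s ha ih =>
    rw [Finset.prod_insert ha, D.leibniz, ih, Finset.sum_insert ha, Finset.erase_insert ha,
      Finset.smul_sum, add_comm]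
    congr 1
    refine Finset.sum_congr rfl fun i hi => ?_
    have hia : i ≠ a := fun h => ha (h ▸ hi)
    rw [Finset.erase_insert_of_ne hia.symm,
      Finset.prod_insert fun h => ha (Finset.mem_of_mem_erase h), mul_smul]

end Prod

section Divisibility

variable {A R : Type*} [CommSemiring A] [CommRing R] [Algebra A R] {ι : Type*} [DecidableEq ι]
  (D : Derivation A R R) {s : Finset ι} {f : ι → R}

theorem dvd_map_prod_iff {i : ι} (hi : i ∈ s) :
    f i ∣ D (∏ j ∈ s, f j) ↔ f i ∣ (∏ j ∈ s.erase i, f j) * D (f i) := by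
  have hrest : f i ∣ ∑ j ∈ s.erase i, (∏ l ∈ s.erase j, f l) * D (f j) :=
    Finset.dvd_sum fun j hj => dvd_mul_of_dvd_left
      (Finset.dvd_prod_of_mem f (Finset.mem_erase.mpr ⟨(Finset.ne_of_mem_erase hj).symm, hi⟩)) _
  rw [map_prod_eq_sum, ← Finset.add_sum_erase _ _ hi]
  exact dvd_add_left hrest

theorem prod_dvd_map_prod_iff [DecompositionMonoid R]
    (hcop : (s : Set ι).Pairwise (IsRelPrime on f)) :
    ∏ j ∈ s, f j ∣ D (∏ j ∈ s, f j) ↔ ∀ i ∈ s, f i ∣ D (f i) := by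
  refine ⟨fun h i hi => ?_, fun h => ?_⟩
  · have hrel : IsRelPrime (f i) (∏ j ∈ s.erase i, f j) :=
      IsRelPrime.prod_right fun j hj => hcop hi (Finset.mem_of_mem_erase hj)
        (Finset.ne_of_mem_erase hj).symm
    exact hrel.dvd_of_dvd_mul_left <|
      (D.dvd_map_prod_iff hi).mp (dvd_trans (Finset.dvd_prod_of_mem f hi) h)
  · rw [map_prod_eq_sum]
    refine Finset.dvd_sum fun i hi => ?_
    obtain ⟨c, hc⟩ := h i hi
    rw [smul_eq_mul, hc, ← mul_assoc, mul_comm _ (f i), Finset.mul_prod_erase s f hi]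
    exact dvd_mul_right _ _

end Divisibility

end Derivation

theorem stmt_0_general {K : Type*} [Field K] {n k : ℕ}
    (f : Fin k → MvPolynomial (Fin n) K)
    (hcop : ∀ i j, i ≠ j → ∀ d : MvPolynomial (Fin n) K,
      d ∣ f i → d ∣ f j → IsUnit d)
    (D : Derivation K (MvPolynomial (Fin n) K) (MvPolynomial (Fin n) K)) :
    D (∏ i, f i) ∈ Ideal.span {∏ i, f i} ↔
      ∀ i, D (f i) ∈ Ideal.span {f i} := by
  simp only [Ideal.mem_span_singleton]
  simpa using D.prod_dvd_map_prod_iff (s := Finset.univ) fun i _ j _ hij d => hcop i j hij d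

/-- For a squarefree product `f = f 0 * ⋯ * f (k-1)` of pairwise
coprime (no common nonunit factor) polynomials over a field of characteristic
zero, a derivation `D` is logarithmic for the product iff it is logarithmic for
each factor. -/
theorem stmt_0 {K : Type*} [Field K] [CharZero K] {n k : ℕ}
    (f : Fin k → MvPolynomial (Fin n) K)
    (hcop : ∀ i j, i ≠ j → ∀ d : MvPolynomial (Fin n) K,
      d ∣ f i → d ∣ f j → IsUnit d)
    (hsf : Squarefree (∏ i, f i))
    (D : Derivation K (MvPolynomial (Fin n) K) (MvPolynomial (Fin n) K)) :
    D (∏ i, f i) ∈ Ideal.span {∏ i, f i} ↔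
      ∀ i, D (f i) ∈ Ideal.span {f i} :=
  stmt_0_general f hcop D
end

section
/- Let f ∈ R = K[x_1,...,x_n] be a free divisor. Then f remains a free divisor when considered as an element of the larger polynomial ring R[x_{n+1},...,x_{n+m}] (the suspension of f is a free divisor). -/
/-!
If `A` is a Saito matrix of `f` (`det A = f` and `∇f · A ≡ 0 mod f`), then the block matrix
`diag(A, 1)` is one for `f` viewed in more variables: its determinant is still `f`, the partial
derivatives of `f` in the new variables vanish, and those in the old variables commute with the
inclusion of rings. Squarefreeness survives because, degrees in each variable being additive over
a domain, a square factor of `f` cannot involve the new variables.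
-/

open MvPolynomial

namespace MvPolynomial

variable {R σ τ : Type*}

theorem vars_subset_of_dvd [CommSemiring R] [NoZeroDivisors R] {p q : MvPolynomial σ R}
    (h : p ∣ q) (hq : q ≠ 0) : p.vars ⊆ q.vars := by
  obtain ⟨r, rfl⟩ := h
  intro i hi
  rw [mem_vars_iff_degreeOf_ne_zero] at hi ⊢
  rw [degreeOf_mul_eq (left_ne_zero_of_mul hq) (right_ne_zero_of_mul hq)]
  omega

theorem squarefree_rename_of_injective [CommSemiring R] [IsDomain R] {f : σ → τ}
    (hf : Function.Injective f) {p : MvPolynomial σ R} (hp : Squarefree p) :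
    Squarefree (rename f p) := by
  intro y hy
  have hvars : (y.vars : Set τ) ⊆ Set.range f := fun i hi ↦ by
    obtain ⟨j, -, rfl⟩ := mem_vars_rename f p <|
      vars_subset_of_dvd (dvd_of_mul_left_dvd hy)
        ((rename_injective f hf).ne hp.ne_zero |>.trans_eq (map_zero _)) hi
    exact ⟨j, rfl⟩
  obtain ⟨z, rfl⟩ := exists_rename_eq_of_vars_subset_range y f hf hvars
  have hz : z * z ∣ p := by
    simpa only [map_mul, killCompl_rename_app] using map_dvd (killCompl hf) hy
  exact (hp z hz).map (rename f)

theorem pderiv_inr_rename_inl [CommSemiring R] [DecidableEq σ] [DecidableEq τ]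
    (p : MvPolynomial σ R) (k : τ) : pderiv (Sum.inr k) (rename Sum.inl p) = 0 :=
  pderiv_eq_zero_of_notMem_vars fun hk ↦ by
    obtain ⟨_, -, h⟩ := mem_vars_rename _ _ hk
    exact Sum.inl_ne_inr h

section SaitoMatrix

variable [CommRing R] [Fintype σ] [DecidableEq σ] [Fintype τ] [DecidableEq τ]

/-- The columns of `A` are the vector fields `∑ i, A i j • ∂ᵢ`, logarithmic along `f = 0`. -/
def IsSaitoMatrix (f : MvPolynomial σ R) (A : Matrix σ σ (MvPolynomial σ R)) : Prop :=
  A.det = f ∧ ∀ j, ∑ i, pderiv i f * A i j ∈ Ideal.span {f}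

namespace IsSaitoMatrix

variable {f : MvPolynomial σ R} {A : Matrix σ σ (MvPolynomial σ R)}

theorem rename_equiv (h : IsSaitoMatrix f A) (e : σ ≃ τ) :
    IsSaitoMatrix (rename e f) (Matrix.reindex e e ((rename e).mapMatrix A)) := by
  refine ⟨by rw [Matrix.det_reindex_self, ← AlgHom.map_det, h.1], fun j ↦ ?_⟩
  have hsum : ∑ i, pderiv i (rename e f) * Matrix.reindex e e ((rename e).mapMatrix A) i j
      = rename e (∑ i, pderiv i f * A i (e.symm j)) := by
    rw [map_sum, ← e.sum_comp]
    refine Finset.sum_congr rfl fun i _ ↦ ?_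
    simp [pderiv_rename e.injective]
  rw [hsum, Ideal.mem_span_singleton]
  exact map_dvd _ (Ideal.mem_span_singleton.mp (h.2 _))

theorem rename_inl (h : IsSaitoMatrix f A) :
    IsSaitoMatrix (rename (Sum.inl : σ → σ ⊕ τ) f)
      (Matrix.fromBlocks ((rename Sum.inl).mapMatrix A) 0 0 (1 : Matrix τ τ _)) := by
  refine ⟨by rw [Matrix.det_fromBlocks_zero₂₁, Matrix.det_one, mul_one, ← AlgHom.map_det, h.1],
    ?_⟩
  rintro (j | j)
  · have hsum : ∑ i, pderiv i (rename Sum.inl f) *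
          Matrix.fromBlocks ((rename Sum.inl).mapMatrix A) 0 0 (1 : Matrix τ τ _) i (Sum.inl j)
        = rename (Sum.inl : σ → σ ⊕ τ) (∑ i, pderiv i f * A i j) := by
      simp [Fintype.sum_sum_type, pderiv_rename Sum.inl_injective]
    rw [hsum, Ideal.mem_span_singleton]
    exact map_dvd _ (Ideal.mem_span_singleton.mp (h.2 _))
  · simp [Fintype.sum_sum_type, pderiv_inr_rename_inl]

end IsSaitoMatrix

end SaitoMatrix

end MvPolynomial

theorem stmt_2_general {K : Type*} [Field K] {n m : ℕ}
    (f : MvPolynomial (Fin n) K)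
    (hred : Squarefree f)
    (hfree : ∃ A : Matrix (Fin n) (Fin n) (MvPolynomial (Fin n) K),
      A.det = f ∧ ∀ j, (∑ i, pderiv i f * A i j) ∈ Ideal.span {f}) :
    Squarefree (rename (Fin.castAdd m) f) ∧
    ∃ A : Matrix (Fin (n + m)) (Fin (n + m)) (MvPolynomial (Fin (n + m)) K),
      A.det = rename (Fin.castAdd m) f ∧
      ∀ j, (∑ i, pderiv i (rename (Fin.castAdd m) f) * A i j)
        ∈ Ideal.span {rename (Fin.castAdd m) f} := by
  obtain ⟨A, hA⟩ := hfree
  have hrename : rename (Fin.castAdd m) f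
      = rename finSumFinEquiv (rename (Sum.inl : Fin n → Fin n ⊕ Fin m) f) := by
    rw [rename_rename]
    rfl
  refine ⟨squarefree_rename_of_injective (Fin.castAdd_injective n m) hred, ?_⟩
  rw [hrename]
  exact ⟨_, ((show IsSaitoMatrix f A from hA).rename_inl (τ := Fin m)).rename_equiv
    finSumFinEquiv⟩

/-- a free divisor remains a free divisor in a larger polynomial
ring (the suspension of a free divisor is a free divisor). -/
theorem stmt_2 {K : Type*} [Field K] [CharZero K] {n m : ℕ}
    (f : MvPolynomial (Fin n) K)
    (hred : Squarefree f)
    (hfree : ∃ A : Matrix (Fin n) (Fin n) (MvPolynomial (Fin n) K),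
      A.det = f ∧ ∀ j, (∑ i, pderiv i f * A i j) ∈ Ideal.span {f}) :
    Squarefree (rename (Fin.castAdd m) f) ∧
    ∃ A : Matrix (Fin (n + m)) (Fin (n + m)) (MvPolynomial (Fin (n + m)) K),
      A.det = rename (Fin.castAdd m) f ∧
      ∀ j, (∑ i, pderiv i (rename (Fin.castAdd m) f) * A i j)
        ∈ Ideal.span {rename (Fin.castAdd m) f} :=
  stmt_2_general f hred hfree
end

section
/- Let f ∈ K[x_1,...,x_n] be a reduced homogeneous polynomial of degree k > 0 over an algebraically closed field K of characteristic 0, and set f* = Σ_{i=1}^n y_i ∂f/∂x_i ∈ K[x_1,...,x_n,y_1,...,y_n]. Then f* is irreducible, and the product f·f* is reduced (squarefree). -/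
/-!
Under `K[x, y] ≃ K[x][y]` the polynomial `f*` becomes a linear form in `y` whose coefficients are
the partial derivatives `∂f/∂xᵢ`; such a form is irreducible as soon as its coefficients have no
common non-unit factor. They have none: by Euler's identity `∑ xᵢ ∂f/∂xᵢ = k f`, a prime `p`
dividing every `∂f/∂xᵢ` divides `f = p q` with `p ∤ q` (as `f` is squarefree), hence divides every
`∂p/∂xᵢ`, which have smaller degree, so they all vanish and `p` is constant in characteristic
zero. The same fact makes the squarefree constant `f` coprime to `f*`, so `f f*` is squarefree.
-/

open MvPolynomial

/-- The map `f ↦ f* = ∑ i, y_i ∂f/∂x_i`, from `K[x]` to `K[x,y]`. -/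
noncomputable def star {K : Type*} [CommRing K] {n : ℕ}
    (f : MvPolynomial (Fin n) K) : MvPolynomial (Fin n ⊕ Fin n) K :=
  ∑ i : Fin n, X (Sum.inr i) * rename Sum.inl (pderiv i f)

theorem Squarefree.map_mulEquiv {M N : Type*} [Monoid M] [Monoid N] (e : M ≃* N) {a : M}
    (h : Squarefree a) : Squarefree (e a) := by
  intro x hx
  have : e.symm x * e.symm x ∣ a := by simpa using map_dvd e.symm hx
  simpa using (h _ this).map e

namespace MvPolynomial

section LinearForms

variable {A τ : Type*} [CommSemiring A] [Fintype τ]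

theorem coeff_single_sum_C_mul_X (g : τ → A) (i : τ) :
    coeff (Finsupp.single i 1) (∑ j, C (g j) * X j) = g i := by
  classical
  simp [coeff_sum, C_mul_X_eq_monomial, coeff_monomial, Finsupp.single_left_inj]

theorem C_dvd_sum_C_mul_X_iff (g : τ → A) (r : A) :
    C r ∣ ∑ j, C (g j) * X j ↔ ∀ i, r ∣ g i := by
  refine ⟨fun h i => ?_, fun h => Finset.dvd_sum fun j _ => (map_dvd C (h j)).mul_right _⟩
  simpa [coeff_single_sum_C_mul_X] using (C_dvd_iff_dvd_coeff r _).mp h (Finsupp.single i 1)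

theorem isHomogeneous_sum_C_mul_X (g : τ → A) : (∑ j, C (g j) * X j).IsHomogeneous 1 :=
  IsHomogeneous.sum _ _ _ fun j _ => isHomogeneous_C_mul_X (g j) j

end LinearForms

section Primitive

variable {A τ : Type*} [CommRing A]

def IsPrimitive (L : MvPolynomial τ A) : Prop :=
  ∀ r, C r ∣ L → IsUnit r

variable [IsDomain A] {L : MvPolynomial τ A}

theorem isUnit_of_dvd_of_totalDegree_eq_zero (hL : L.IsPrimitive)
    {d : MvPolynomial τ A} (hd : d.totalDegree = 0) (hdL : d ∣ L) : IsUnit d := by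
  have hC := totalDegree_eq_zero_iff_eq_C.mp hd
  exact isUnit_iff_totalDegree_of_isReduced.mpr ⟨hL _ (by rwa [← hC]), hd⟩

theorem irreducible_of_isHomogeneous_one (h1 : L.IsHomogeneous 1)
    (hL : L.IsPrimitive) : Irreducible L := by
  have hL0 : L ≠ 0 := fun h => not_isUnit_zero (hL 0 (by simp [h]))
  have hdeg : L.totalDegree = 1 := h1.totalDegree hL0
  refine ⟨fun hu => ?_, fun a b hab => ?_⟩
  · have := totalDegree_le_of_dvd_of_isDomain hu.dvd one_ne_zero
    rw [totalDegree_one] at this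
    omega
  · subst hab
    have := totalDegree_mul_of_isDomain (left_ne_zero_of_mul hL0) (right_ne_zero_of_mul hL0)
    rcases Nat.add_eq_one_iff.mp (this.symm.trans hdeg) with ⟨ha, -⟩ | ⟨-, hb⟩
    · exact .inl (isUnit_of_dvd_of_totalDegree_eq_zero hL ha (dvd_mul_right a b))
    · exact .inr (isUnit_of_dvd_of_totalDegree_eq_zero hL hb (dvd_mul_left b a))

theorem totalDegree_eq_zero_of_dvd_C {a : A} (ha : a ≠ 0) {d : MvPolynomial τ A}
    (hd : d ∣ C a) : d.totalDegree = 0 :=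
  Nat.le_zero.mp <| (totalDegree_le_of_dvd_of_isDomain hd (C_ne_zero.mpr ha)).trans_eq
    (totalDegree_C a)

theorem squarefree_C {a : A} (ha : Squarefree a) : Squarefree (C a : MvPolynomial τ A) := by
  intro d hdd
  have hd := totalDegree_eq_zero_iff_eq_C.mp
    (totalDegree_eq_zero_of_dvd_C ha.ne_zero ((dvd_mul_right d d).trans hdd))
  rw [hd, ← map_mul, C_dvd_iff_dvd_coeff] at hdd
  rw [hd]
  exact (ha _ (by simpa using hdd 0)).map C

theorem squarefree_C_mul [UniqueFactorizationMonoid A] {a : A} (ha : Squarefree a)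
    (hLsq : Squarefree L) (hL : L.IsPrimitive) : Squarefree (C a * L) :=
  squarefree_mul_iff.mpr ⟨fun _ hda hdL => isUnit_of_dvd_of_totalDegree_eq_zero hL
    (totalDegree_eq_zero_of_dvd_C ha.ne_zero hda) hdL, squarefree_C ha, hLsq⟩

end Primitive

section Derivatives

variable {R σ : Type*} [CommRing R]

theorem totalDegree_pderiv_le (p : MvPolynomial σ R) (i : σ) :
    (pderiv i p).totalDegree ≤ p.totalDegree - 1 := by
  refine Finset.sup_le fun m hm => ?_
  have hm' : m + Finsupp.single i 1 ∈ p.support := by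
    rw [mem_support_iff, coeff_pderiv] at hm
    exact mem_support_iff.mpr (left_ne_zero_of_mul hm)
  have := le_totalDegree hm'
  rw [Finsupp.sum_add_index' (fun _ => rfl) (fun _ _ _ => rfl),
    Finsupp.sum_single_index rfl] at this
  omega

theorem totalDegree_eq_zero_of_forall_pderiv_eq_zero [IsDomain R] [CharZero R]
    {p : MvPolynomial σ R} (h : ∀ i, pderiv i p = 0) : p.totalDegree = 0 := by
  rw [totalDegree_eq_zero_iff]
  intro m hm i
  by_contra hmi
  have hle : Finsupp.single i 1 ≤ m :=
    Finsupp.single_le_iff.mpr (Nat.one_le_iff_ne_zero.mpr hmi)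
  have := coeff_pderiv (i := i) p (m - Finsupp.single i 1)
  rw [h i, tsub_add_cancel_of_le hle] at this
  simp only [coeff_zero, Finsupp.tsub_apply, Finsupp.single_eq_same, zero_eq_mul,
    mem_support_iff.mp hm, false_or] at this
  norm_cast at this

theorem pderiv_eq_zero_of_dvd_pderiv [IsDomain R] {p : MvPolynomial σ R} {i : σ}
    (h : p ∣ pderiv i p) : pderiv i p = 0 := by
  by_contra hne
  have hle := (totalDegree_le_of_dvd_of_isDomain h hne).trans (totalDegree_pderiv_le p i)
  have hp : p = C (p.coeff 0) := totalDegree_eq_zero_iff_eq_C.mp (by omega)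
  exact hne (by rw [hp, pderiv_C])

theorem IsHomogeneous.dvd_of_forall_dvd_pderiv [Fintype σ] {f : MvPolynomial σ R} {k : ℕ}
    (hf : f.IsHomogeneous k) (hk : IsUnit (k : R)) {r : MvPolynomial σ R}
    (hr : ∀ i, r ∣ pderiv i f) : r ∣ f := by
  have : r ∣ C (k : R) * f := by
    rw [map_natCast, ← nsmul_eq_mul, ← hf.sum_X_mul_pderiv]
    exact Finset.dvd_sum fun i _ => (hr i).mul_left _
  exact (hk.map C).dvd_mul_left.mp this

theorem IsHomogeneous.isUnit_of_forall_dvd_pderiv {K : Type*} [Field K] [CharZero K]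
    [Fintype σ] {f : MvPolynomial σ K} {k : ℕ} (hf : f.IsHomogeneous k) (hk : 0 < k)
    (hsq : Squarefree f) {r : MvPolynomial σ K} (hr : ∀ i, r ∣ pderiv i f) : IsUnit r := by
  have hrf :=
    hf.dvd_of_forall_dvd_pderiv (isUnit_iff_ne_zero.mpr (Nat.cast_ne_zero.mpr hk.ne')) hr
  by_contra hru
  obtain ⟨p, hp, hpr⟩ :=
    WfDvdMonoid.exists_irreducible_factor hru (ne_zero_of_dvd_ne_zero hsq.ne_zero hrf)
  obtain ⟨q, rfl⟩ := hpr.trans hrf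
  have hpq : ¬p ∣ q := fun h => hp.not_isUnit (hsq p (mul_dvd_mul_left p h))
  have hpp : ∀ i, p ∣ pderiv i p := fun i => by
    have h := hpr.trans (hr i)
    rw [pderiv_mul, dvd_add_left (dvd_mul_right p _)] at h
    exact (hp.prime.dvd_mul.mp h).resolve_right hpq
  have hdeg :=
    totalDegree_eq_zero_of_forall_pderiv_eq_zero fun i => pderiv_eq_zero_of_dvd_pderiv (hpp i)
  have hp0 : p.coeff 0 ≠ 0 := fun h0 =>
    hp.ne_zero (by rw [totalDegree_eq_zero_iff_eq_C.mp hdeg, h0, C_0])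
  exact hp.not_isUnit (isUnit_iff_totalDegree_of_isReduced.mpr ⟨hp0.isUnit, hdeg⟩)

end Derivatives

noncomputable def sumAlgEquivInr (R S₁ S₂ : Type*) [CommSemiring R] :
    MvPolynomial (S₁ ⊕ S₂) R ≃ₐ[R] MvPolynomial S₂ (MvPolynomial S₁ R) :=
  (renameEquiv R (Equiv.sumComm S₁ S₂)).trans (sumAlgEquiv R S₂ S₁)

section SumAlgEquivInr

variable {R S₁ S₂ : Type*} [CommSemiring R]

theorem sumAlgEquivInr_rename_inl (p : MvPolynomial S₁ R) :
    sumAlgEquivInr R S₁ S₂ (rename Sum.inl p) = C p := by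
  simpa [sumAlgEquivInr, rename_rename, Function.comp_def] using
    DFunLike.congr_fun (sumAlgEquiv_comp_rename_inr R S₂ S₁) p

theorem sumAlgEquivInr_X_inr (i : S₂) : sumAlgEquivInr R S₁ S₂ (X (Sum.inr i)) = X i := by
  simp [sumAlgEquivInr]

end SumAlgEquivInr

end MvPolynomial

theorem sumAlgEquivInr_star {K : Type*} [CommRing K] {n : ℕ} (f : MvPolynomial (Fin n) K) :
    sumAlgEquivInr K (Fin n) (Fin n) (_root_.star f) = ∑ i, C (pderiv i f) * X i := by
  simp [_root_.star, sumAlgEquivInr_rename_inl, sumAlgEquivInr_X_inr, mul_comm]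

theorem stmt_6_general {K : Type*} [Field K] [CharZero K] {n k : ℕ}
    (f : MvPolynomial (Fin n) K) (hk : 0 < k)
    (hhom : f.IsHomogeneous k) (hred : Squarefree f) :
    Irreducible (star f) ∧ Squarefree (rename Sum.inl f * star f) := by
  let e := sumAlgEquivInr K (Fin n) (Fin n)
  have hprim : (e (star f)).IsPrimitive := fun r hr => by
    rw [sumAlgEquivInr_star, C_dvd_sum_C_mul_X_iff] at hr
    exact hhom.isUnit_of_forall_dvd_pderiv hk hred hr
  have hirr : Irreducible (e (star f)) := irreducible_of_isHomogeneous_one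
    (sumAlgEquivInr_star f ▸ isHomogeneous_sum_C_mul_X _) hprim
  have hsq : Squarefree (e (rename Sum.inl f * star f)) := by
    rw [map_mul, sumAlgEquivInr_rename_inl]
    exact squarefree_C_mul hred hirr.squarefree hprim
  exact ⟨(MulEquiv.irreducible_iff e).mp hirr,
    by simpa using hsq.map_mulEquiv e.symm.toMulEquiv⟩

/-- for `f` reduced homogeneous of degree `k > 0` over an
algebraically closed field of characteristic zero, `f*` is irreducible and
`f · f*` is reduced (squarefree). -/
theorem stmt_6 {K : Type*} [Field K] [IsAlgClosed K] [CharZero K] {n k : ℕ}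
    (f : MvPolynomial (Fin n) K) (hk : 0 < k)
    (hhom : f.IsHomogeneous k) (hred : Squarefree f) :
    Irreducible (star f) ∧ Squarefree (rename Sum.inl f * star f) :=
  stmt_6_general f hk hhom hred
end

section
/- Let f ∈ K[x_1,...,x_n] be a form such that g = x_1⋯x_n·f is reduced, and set y_i = x_1⋯x_n/x_i. If (α_1,...,α_n) is a syzygy of the gradient ∇g (i.e., Σ_i α_i ∂g/∂x_i = 0), then x_i divides α_i for every i, and (α_1/x_1, ..., α_n/x_n) is a syzygy of (x_1 f_1 + f, ..., x_n f_n + f), where f_i = ∂f/∂x_i. -/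
/-!
Write `yᵢ = ∏_{j ≠ i} Xⱼ`. By the Leibniz rule `∂ᵢ(X₁⋯Xₙ f) = yᵢ (Xᵢ ∂ᵢf + f)`, so the syzygy
reads `∑ⱼ αⱼ yⱼ (Xⱼ ∂ⱼf + f) = 0`. Every term with `j ≠ i` is divisible by `Xᵢ`, hence so is
`αᵢ yᵢ (Xᵢ ∂ᵢf + f)` and therefore `αᵢ yᵢ f`. Squarefreeness of `X₁⋯Xₙ f` means `Xᵢ ∤ yᵢ f`, and
`Xᵢ` is prime, so `Xᵢ ∣ αᵢ`. Writing `αᵢ = Xᵢ βᵢ`, the syzygy becomes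
`X₁⋯Xₙ · ∑ᵢ βᵢ (Xᵢ ∂ᵢf + f) = 0`, and `X₁⋯Xₙ ≠ 0`.
-/

theorem dvd_of_sum_eq_zero_of_dvd_of_ne {ι R : Type*} [CommRing R] {s : Finset ι} {c : ι → R}
    {a : R} {i : ι} (hsum : ∑ j ∈ s, c j = 0) (hi : i ∈ s) (hdvd : ∀ j ∈ s, j ≠ i → a ∣ c j) :
    a ∣ c i := by
  classical
  rw [← Finset.add_sum_erase s c hi] at hsum
  have hrest : a ∣ ∑ j ∈ s.erase i, c j :=
    Finset.dvd_sum fun j hj => hdvd j (Finset.mem_of_mem_erase hj) (Finset.ne_of_mem_erase hj)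
  exact (dvd_add_left hrest).mp (hsum ▸ dvd_zero a)

namespace MvPolynomial

variable {σ R : Type*}

section CommRing

variable [CommRing R]

theorem pderiv_prod_X_of_notMem {i : σ} {s : Finset σ} (hi : i ∉ s) :
    pderiv i (∏ j ∈ s, X j : MvPolynomial σ R) = 0 :=
  Finset.prod_induction _ (fun p => pderiv i p = 0)
    (fun p q hp hq => by rw [pderiv_mul, hp, hq, mul_zero, zero_mul, add_zero])
    (pderiv i).map_one_eq_zero fun _ hj => pderiv_X_of_ne (ne_of_mem_of_not_mem hj hi)

variable [Fintype σ] [DecidableEq σ]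

theorem pderiv_prod_X_mul (i : σ) (f : MvPolynomial σ R) :
    pderiv i ((∏ j, X j) * f) = (∏ j ∈ Finset.univ.erase i, X j) * (X i * pderiv i f + f) := by
  rw [← Finset.mul_prod_erase _ _ (Finset.mem_univ i), pderiv_mul, pderiv_mul, pderiv_X_self,
    pderiv_prod_X_of_notMem (Finset.notMem_erase i _)]
  ring

theorem sum_X_mul_mul_pderiv_prod_X_mul (f : MvPolynomial σ R) (β : σ → MvPolynomial σ R) :
    ∑ i, X i * β i * pderiv i ((∏ j, X j) * f) =
      (∏ j, X j) * ∑ i, β i * (X i * pderiv i f + f) := by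
  rw [Finset.mul_sum]
  refine Finset.sum_congr rfl fun i _ => ?_
  rw [pderiv_prod_X_mul, ← Finset.mul_prod_erase _ _ (Finset.mem_univ i)]
  ring

end CommRing

variable [CommRing R] [IsDomain R] [Fintype σ] [DecidableEq σ]

theorem not_X_dvd_prod_X_erase_mul {f : MvPolynomial σ R}
    (hred : Squarefree ((∏ j, X j) * f)) (i : σ) :
    ¬ X i ∣ (∏ j ∈ Finset.univ.erase i, X j) * f := fun hdvd =>
  (X_prime (R := R) (i := i)).not_isUnit <| hred _ <| by
    rw [← Finset.mul_prod_erase _ _ (Finset.mem_univ i), mul_assoc]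
    exact mul_dvd_mul_left _ hdvd

theorem X_dvd_of_sum_mul_pderiv_prod_X_mul_eq_zero {f : MvPolynomial σ R}
    (hred : Squarefree ((∏ j, X j) * f)) {α : σ → MvPolynomial σ R}
    (hsyz : ∑ j, α j * pderiv j ((∏ k, X k) * f) = 0) (i : σ) : X i ∣ α i := by
  simp only [pderiv_prod_X_mul] at hsyz
  have hterm :=
    dvd_of_sum_eq_zero_of_dvd_of_ne (a := X i) hsyz (Finset.mem_univ i) fun j _ hji => by
      have hXY : X i ∣ ∏ k ∈ Finset.univ.erase j, (X k : MvPolynomial σ R) :=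
        Finset.dvd_prod_of_mem X (Finset.mem_erase.mpr ⟨Ne.symm hji, Finset.mem_univ i⟩)
      exact dvd_mul_of_dvd_right (dvd_mul_of_dvd_left hXY _) _
  have hf : X i ∣ α i * ((∏ k ∈ Finset.univ.erase i, X k) * f) := by
    rw [show α i * ((∏ k ∈ Finset.univ.erase i, X k) * (X i * pderiv i f + f)) =
        X i * (α i * (∏ k ∈ Finset.univ.erase i, X k) * pderiv i f) +
          α i * ((∏ k ∈ Finset.univ.erase i, X k) * f) by ring] at hterm
    exact (dvd_add_right (dvd_mul_right _ _)).mp hterm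
  exact (X_prime.dvd_or_dvd hf).resolve_right (not_X_dvd_prod_X_erase_mul hred i)

end MvPolynomial

open MvPolynomial

theorem stmt_8_general {K : Type*} [Field K] {n : ℕ}
    (f : MvPolynomial (Fin n) K)
    (hred : Squarefree ((∏ i : Fin n, X i) * f))
    (α : Fin n → MvPolynomial (Fin n) K)
    (hsyz : ∑ i, α i * pderiv i ((∏ j : Fin n, X j) * f) = 0) :
    (∀ i, X i ∣ α i) ∧
    ∃ β : Fin n → MvPolynomial (Fin n) K,
      (∀ i, α i = X i * β i) ∧
      ∑ i, β i * (X i * pderiv i f + f) = 0 := by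
  have hdvd := X_dvd_of_sum_mul_pderiv_prod_X_mul_eq_zero hred hsyz
  refine ⟨hdvd, ?_⟩
  choose β hβ using hdvd
  refine ⟨β, hβ, ?_⟩
  obtain rfl : α = fun i => X i * β i := funext hβ
  rw [sum_X_mul_mul_pderiv_prod_X_mul] at hsyz
  exact (mul_eq_zero.mp hsyz).resolve_left (Finset.prod_ne_zero_iff.mpr fun j _ => X_ne_zero j)

/-- let `f` be a form such that `g = x_1⋯x_n · f` is reduced. If
`(α_1,…,α_n)` is a syzygy of the gradient `∇g`, then `x_i ∣ α_i` for every `i`,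
and the quotients `β_i = α_i / x_i` form a syzygy of
`(x_1 f_1 + f, …, x_n f_n + f)`. -/
theorem stmt_8 {K : Type*} [Field K] [CharZero K] {n d : ℕ}
    (f : MvPolynomial (Fin n) K) (hhom : f.IsHomogeneous d)
    (hred : Squarefree ((∏ i : Fin n, X i) * f))
    (α : Fin n → MvPolynomial (Fin n) K)
    (hsyz : ∑ i, α i * pderiv i ((∏ j : Fin n, X j) * f) = 0) :
    (∀ i, X i ∣ α i) ∧
    ∃ β : Fin n → MvPolynomial (Fin n) K,
      (∀ i, α i = X i * β i) ∧
      ∑ i, β i * (X i * pderiv i f + f) = 0 :=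
  stmt_8_general f hred α hsyz
end

section
/- Let f = Σ_{i=1}^k u_i M_i ∈ K[x_1,...,x_n] with u_i ∈ K nonzero and M_1,...,M_k pairwise coprime monomials of the same degree d ≥ 1. Then the ideal (x_1·∂f/∂x_1, ..., x_n·∂f/∂x_n) equals the complete intersection ideal (M_1,...,M_k). -/
open MvPolynomial Function

/-!
By Euler's relation, `x_t ∂/∂x_t` multiplies each monomial by its exponent of `x_t`,
so `x_t ∂f/∂x_t = ∑_j (m_j)_t u_j M_j` lies in `(M_1, …, M_k)`. Conversely, since the
supports are disjoint, for `t` in the support of `m_j` (nonempty because `deg M_j = d ≥ 1`)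
only `M_j` survives: `x_t ∂f/∂x_t = (m_j)_t u_j M_j`, a nonzero multiple of `M_j` in
characteristic zero.
-/

namespace MvPolynomial

variable {R σ ι : Type*} [CommSemiring R] [Fintype ι]

theorem X_mul_pderiv_sum_monomial (c : ι → R) (m : ι → σ →₀ ℕ) (t : σ) :
    X t * pderiv t (∑ j, monomial (m j) (c j)) = ∑ j, monomial (m j) ((m j t : R) * c j) := by
  simp only [map_sum, Finset.mul_sum, X_mul_pderiv_monomial, smul_monomial, nsmul_eq_mul]

theorem X_mul_pderiv_sum_monomial_of_mem_support (c : ι → R) {m : ι → σ →₀ ℕ}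
    (hdisj : Pairwise (Disjoint on fun j => (m j).support)) {j : ι} {t : σ}
    (ht : t ∈ (m j).support) :
    X t * pderiv t (∑ j, monomial (m j) (c j)) = monomial (m j) ((m j t : R) * c j) := by
  rw [X_mul_pderiv_sum_monomial]
  refine Finset.sum_eq_single j (fun l _ hl => ?_) (by simp)
  have hlt : m l t = 0 :=
    Finsupp.notMem_support_iff.mp (Finset.disjoint_left.mp (hdisj hl.symm) ht)
  simp [hlt]

theorem span_X_mul_pderiv_sum_monomial {K : Type*} [Field K] [CharZero K] (c : ι → K)
    (hc : ∀ j, c j ≠ 0) (m : ι → σ →₀ ℕ) (hm : ∀ j, m j ≠ 0)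
    (hdisj : Pairwise (Disjoint on fun j => (m j).support)) :
    Ideal.span (Set.range fun t => X t * pderiv t (∑ j, monomial (m j) (c j))) =
      Ideal.span (Set.range fun j => (monomial (m j) 1 : MvPolynomial σ K)) := by
  apply le_antisymm <;> rw [Ideal.span_le] <;> rintro _ ⟨i, rfl⟩ <;>
    simp only [SetLike.mem_coe]
  · rw [X_mul_pderiv_sum_monomial]
    refine Ideal.sum_mem _ fun j _ => ?_
    rw [← mul_one ((m j i : K) * c j), ← C_mul_monomial]
    exact Ideal.mul_mem_left _ _ (Ideal.subset_span ⟨j, rfl⟩)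
  · obtain ⟨t, ht⟩ := Finsupp.support_nonempty_iff.mpr (hm i)
    have hcoef : (m i t : K) * c i ≠ 0 :=
      mul_ne_zero (Nat.cast_ne_zero.mpr (Finsupp.mem_support_iff.mp ht)) (hc i)
    have hmonomial : (monomial (m i) 1 : MvPolynomial σ K) =
        C ((m i t : K) * c i)⁻¹ * (X t * pderiv t (∑ j, monomial (m j) (c j))) := by
      rw [X_mul_pderiv_sum_monomial_of_mem_support c hdisj ht, C_mul_monomial,
        inv_mul_cancel₀ hcoef]
    rw [hmonomial]
    exact Ideal.mul_mem_left _ _ (Ideal.subset_span ⟨t, rfl⟩)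

end MvPolynomial

/-- for `f = ∑ u_i M_i` with `u_i ≠ 0` and `M_i` pairwise coprime
monomials (disjoint supports of exponent vectors) of the same degree `d ≥ 1`,
the ideal `(x_1 ∂f/∂x_1, …, x_n ∂f/∂x_n)` equals the complete intersection
ideal `(M_1, …, M_k)`. -/
theorem stmt_10 {K : Type*} [Field K] [CharZero K] {n k d : ℕ} (hd : 1 ≤ d)
    (u : Fin k → K) (hu : ∀ i, u i ≠ 0)
    (m : Fin k → (Fin n →₀ ℕ))
    (hdisj : ∀ i j, i ≠ j → Disjoint (m i).support (m j).support)
    (hdeg : ∀ i, (m i).sum (fun _ e => e) = d)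
    (f : MvPolynomial (Fin n) K)
    (hf : f = ∑ i, C (u i) * monomial (m i) 1) :
    Ideal.span (Set.range fun i : Fin n => X i * pderiv i f) =
      Ideal.span (Set.range fun i : Fin k => (monomial (m i) 1 :
        MvPolynomial (Fin n) K)) := by
  have hm : ∀ i, m i ≠ 0 := by
    intro i hi
    have := hdeg i
    rw [hi, Finsupp.sum_zero_index] at this
    omega
  simp only [hf, C_mul_monomial, mul_one]
  exact span_X_mul_pderiv_sum_monomial u hu m hm hdisj
end

section
/- Let F = x_1⋯x_n · y^u · z^t · (x^a y^α + x^b z^β) in K[x_1,...,x_n,y,z] with a,b ∈ ℕ^n, min(a_i,b_i)=0 for all i, α,β > 0, u,t ∈ {0,1}, and F reduced. Then F is a free divisor. -/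
/-!
Write `y = X (Sum.inr 0)`, `z = X (Sum.inr 1)` and `F = x₁⋯xₙ · H` with `H = yᵘ zᵗ G`.
A weight vector `w` under which the two monomials of `G` have equal weighted degree makes
`F` weighted homogeneous, so by Euler's identity the vector field `∑ w_v x_v ∂_v` sends `F` into
`(F)`. The weights `α e_{xᵢ} + (bᵢ - aᵢ) e_y` and `β e_y + α e_z` give `n + 1` such columns;
the remaining one is the Hamiltonian field `H_z ∂_y - H_y ∂_z`, which kills `F` since `x₁⋯xₙ`
does not involve `y, z`. The matrix is block lower triangular, and Euler's identity for `H`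
turns the determinant of its `2 × 2` block into a nonzero multiple of `H`.
-/

open MvPolynomial

namespace MvPolynomial

variable {R σ : Type*} [CommSemiring R]

theorem IsWeightedHomogeneous.sum_pderiv_mul_C_mul_X [Fintype σ] {w : σ → R} {m : R}
    {φ : MvPolynomial σ R} (h : φ.IsWeightedHomogeneous w m) :
    ∑ i, pderiv i φ * (C (w i) * X i) = C m * φ := by
  induction h using IsWeightedHomogeneous.induction_on with
  | zero => simp
  | add p q _ _ hp hq => simp only [map_add, add_mul, Finset.sum_add_distrib, hp, hq, mul_add]
  | monomial d r hd =>
    have hX (i : σ) :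
        pderiv i (monomial d r) * (C (w i) * X i) = C (d i • w i) * monomial d r := by
      rw [mul_left_comm, mul_comm (pderiv i _), X_mul_pderiv_monomial, nsmul_eq_mul,
        nsmul_eq_mul, map_mul, map_natCast]
      ring
    simp only [hX, ← Finset.sum_mul, ← map_sum, ← hd, Finsupp.weight_apply,
      Finsupp.sum_fintype, zero_smul, implies_true]

theorem pderiv_mul_pderiv_eq_of_pderiv_eq_zero {i j : σ} {g h : MvPolynomial σ R}
    (hi : pderiv i g = 0) (hj : pderiv j g = 0) :
    pderiv i (g * h) * pderiv j h = pderiv j (g * h) * pderiv i h := by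
  simp only [pderiv_mul, hi, hj, zero_mul, zero_add]
  ring

theorem pderiv_inr_prod_X_inl {ι τ : Type*} [Fintype ι] (k : τ) :
    pderiv (Sum.inr k) (∏ i : ι, X (Sum.inl i) : MvPolynomial (ι ⊕ τ) R) = 0 :=
  Finset.prod_induction _ (fun p => pderiv (Sum.inr k) p = 0)
    (fun p q hp hq => by rw [pderiv_mul, hp, hq, mul_zero, zero_mul, add_zero]) pderiv_one
    (fun _ _ => pderiv_X_of_ne Sum.inl_ne_inr)

end MvPolynomial

section BinomialFreeDivisor

variable {K : Type*} {n : ℕ}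

noncomputable def binomialCore [CommSemiring K] (a b : Fin n → ℕ) (α β u t : ℕ) :
    MvPolynomial (Fin n ⊕ Fin 2) K :=
  X (Sum.inr 0) ^ u * X (Sum.inr 1) ^ t *
    ((∏ i, X (Sum.inl i) ^ a i) * X (Sum.inr 0) ^ α +
      (∏ i, X (Sum.inl i) ^ b i) * X (Sum.inr 1) ^ β)

noncomputable def binomialDivisor [CommSemiring K] (a b : Fin n → ℕ) (α β u t : ℕ) :
    MvPolynomial (Fin n ⊕ Fin 2) K :=
  (∏ i, X (Sum.inl i)) * binomialCore a b α β u t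

def IsBalancedWeight [AddCommMonoid K] (a b : Fin n → ℕ) (α β : ℕ) (w : Fin n ⊕ Fin 2 → K) :
    Prop :=
  ∑ i, a i • w (Sum.inl i) + α • w (Sum.inr 0) = ∑ i, b i • w (Sum.inl i) + β • w (Sum.inr 1)

theorem isWeightedHomogeneous_binomialCore [CommSemiring K] {a b : Fin n → ℕ} {α β : ℕ}
    (u t : ℕ) {w : Fin n ⊕ Fin 2 → K} (hw : IsBalancedWeight a b α β w) :
    (binomialCore a b α β u t : MvPolynomial _ K).IsWeightedHomogeneous w
      (u • w (Sum.inr 0) + t • w (Sum.inr 1) +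
        (∑ i, a i • w (Sum.inl i) + α • w (Sum.inr 0))) := by
  have hx (e : Fin n → ℕ) :
      (∏ i, X (Sum.inl i) ^ e i : MvPolynomial _ K).IsWeightedHomogeneous w
        (∑ i, e i • w (Sum.inl i)) :=
    IsWeightedHomogeneous.prod _ _ _ fun _ _ => (isWeightedHomogeneous_X K w _).pow _
  have hyz (k : Fin 2) (e : ℕ) := (isWeightedHomogeneous_X K w (Sum.inr k)).pow e
  exact ((hyz 0 u).mul (hyz 1 t)).mul (((hx a).mul (hyz 0 α)).add (hw ▸ (hx b).mul (hyz 1 β)))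

theorem exists_isWeightedHomogeneous_binomialDivisor [CommSemiring K] {a b : Fin n → ℕ}
    {α β : ℕ} (u t : ℕ) {w : Fin n ⊕ Fin 2 → K} (hw : IsBalancedWeight a b α β w) :
    ∃ m, (binomialDivisor a b α β u t : MvPolynomial _ K).IsWeightedHomogeneous w m :=
  ⟨_, (IsWeightedHomogeneous.prod _ _ _ fun _ _ => isWeightedHomogeneous_X K w _).mul
    (isWeightedHomogeneous_binomialCore u t hw)⟩

def xEulerWeight [CommRing K] (a b : Fin n → ℕ) (α : ℕ) (i₀ : Fin n) : Fin n ⊕ Fin 2 → K :=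
  Sum.elim (Pi.single i₀ (α : K)) ![(b i₀ : K) - a i₀, 0]

def yzEulerWeight [CommSemiring K] (α β : ℕ) : Fin n ⊕ Fin 2 → K :=
  Sum.elim 0 ![(β : K), α]

-- `αⁿ` is the determinant factor of the diagonal block, `uβ + tα + αβ` the weighted degree
-- of `binomialCore` for `yzEulerWeight`.
def binomialScale [CommSemiring K] (n α β u t : ℕ) : K := α ^ n * (u * β + t * α + α * β)

noncomputable def saitoMatrix [Field K] (a b : Fin n → ℕ) (α β u t : ℕ) :
    Matrix (Fin n ⊕ Fin 2) (Fin n ⊕ Fin 2) (MvPolynomial (Fin n ⊕ Fin 2) K) :=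
  Matrix.fromBlocks (Matrix.diagonal fun i => C (α : K) * X (Sum.inl i)) 0
    (Matrix.of fun k i => C (xEulerWeight a b α i (Sum.inr k)) * X (Sum.inr k))
    !![C (binomialScale n α β u t)⁻¹ * pderiv (Sum.inr 1) (binomialCore a b α β u t),
        C (β : K) * X (Sum.inr 0);
      -(C (binomialScale n α β u t)⁻¹ * pderiv (Sum.inr 0) (binomialCore a b α β u t)),
        C (α : K) * X (Sum.inr 1)]

section

variable [Field K] (a b : Fin n → ℕ) (α β u t : ℕ)

theorem saitoMatrix_apply_inl (i : Fin n ⊕ Fin 2) (i₀ : Fin n) :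
    saitoMatrix (K := K) a b α β u t i (Sum.inl i₀) = C (xEulerWeight a b α i₀ i) * X i := by
  rcases i with j | k
  · by_cases h : j = i₀
    · subst h; simp [saitoMatrix, xEulerWeight]
    · simp [saitoMatrix, xEulerWeight, h]
  · simp [saitoMatrix]

theorem saitoMatrix_apply_inr_one (i : Fin n ⊕ Fin 2) :
    saitoMatrix (K := K) a b α β u t i (Sum.inr 1) = C (yzEulerWeight α β i) * X i := by
  rcases i with j | k
  · simp [saitoMatrix, yzEulerWeight]
  · fin_cases k <;> simp [saitoMatrix, yzEulerWeight]

theorem sum_pderiv_mul_saitoMatrix_inr_zero :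
    ∑ i, pderiv i (binomialDivisor a b α β u t) *
      saitoMatrix (K := K) a b α β u t i (Sum.inr 0) = 0 := by
  have := pderiv_mul_pderiv_eq_of_pderiv_eq_zero (g := ∏ i : Fin n, X (Sum.inl i))
    (h := (binomialCore a b α β u t : MvPolynomial _ K))
    (pderiv_inr_prod_X_inl 0) (pderiv_inr_prod_X_inl 1)
  simp only [binomialDivisor, saitoMatrix, Fintype.sum_sum_type, Matrix.fromBlocks_apply₁₂,
    Matrix.zero_apply, mul_zero, Finset.sum_const_zero, Matrix.fromBlocks_apply₂₂,
    Matrix.of_apply, Matrix.cons_val', Matrix.cons_val_zero, Matrix.cons_val_fin_one,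
    Fin.sum_univ_two, Matrix.cons_val_one, zero_add]
  linear_combination C (binomialScale n α β u t : K)⁻¹ * this

theorem det_saitoMatrix [CharZero K] (hα : 0 < α) (hβ : 0 < β) :
    (saitoMatrix (K := K) a b α β u t).det = binomialDivisor a b α β u t := by
  have hEuler := (isWeightedHomogeneous_binomialCore (K := K) (a := a) (b := b) (α := α)
    (β := β) u t (w := yzEulerWeight α β)
    (by simp [IsBalancedWeight, yzEulerWeight, mul_comm])).sum_pderiv_mul_C_mul_X
  simp only [yzEulerWeight, Fintype.sum_sum_type, Sum.elim_inl, Pi.zero_apply, C_0, zero_mul,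
    mul_zero, Finset.sum_const_zero, Sum.elim_inr, Fin.sum_univ_two, Matrix.cons_val_zero,
    map_natCast, Matrix.cons_val_one, Matrix.cons_val_fin_one, zero_add, nsmul_eq_mul,
    C_add, C_mul] at hEuler
  have hscale : (α : K) ^ n * (binomialScale n α β u t)⁻¹ * (u * β + t * α + α * β) = 1 := by
    have hαK : (α : K) ≠ 0 := by exact_mod_cast hα.ne'
    have hdeg : (u * β + t * α + α * β : K) ≠ 0 := by
      exact_mod_cast (Nat.add_pos_right _ (Nat.mul_pos hα hβ)).ne'
    rw [binomialScale, mul_inv, ← mul_assoc, mul_inv_cancel₀ (pow_ne_zero _ hαK), one_mul,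
      inv_mul_cancel₀ hdeg]
  have hscaleC := congrArg (C : K → MvPolynomial (Fin n ⊕ Fin 2) K) hscale
  simp only [map_mul, map_pow, map_natCast, map_add, map_one] at hscaleC
  rw [saitoMatrix, Matrix.det_fromBlocks_zero₁₂, Matrix.det_diagonal, Matrix.det_fin_two_of,
    Finset.prod_mul_distrib, Finset.prod_const, Finset.card_univ, Fintype.card_fin,
    binomialDivisor]
  simp only [map_natCast]
  linear_combination (↑α ^ n * (∏ i, X (Sum.inl i)) * C (binomialScale n α β u t)⁻¹) * hEuler
    + ((∏ i, X (Sum.inl i)) * binomialCore a b α β u t) * hscaleC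

theorem sum_pderiv_mul_saitoMatrix_mem_span (j : Fin n ⊕ Fin 2) :
    ∑ i, pderiv i (binomialDivisor a b α β u t) * saitoMatrix (K := K) a b α β u t i j ∈
      Ideal.span {binomialDivisor a b α β u t} := by
  have euler {w : Fin n ⊕ Fin 2 → K} (hw : IsBalancedWeight a b α β w) :
      ∑ i, pderiv i (binomialDivisor a b α β u t) * (C (w i) * X i) ∈
        Ideal.span {binomialDivisor a b α β u t} := by
    obtain ⟨m, hm⟩ := exists_isWeightedHomogeneous_binomialDivisor u t hw
    rw [hm.sum_pderiv_mul_C_mul_X]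
    exact Ideal.mem_span_singleton.2 (dvd_mul_left _ _)
  match j with
  | Sum.inl i₀ =>
    simp only [saitoMatrix_apply_inl]
    exact euler (by simp [IsBalancedWeight, xEulerWeight, Pi.single_apply]; ring)
  | Sum.inr 0 =>
    rw [sum_pderiv_mul_saitoMatrix_inr_zero]
    exact zero_mem _
  | Sum.inr 1 =>
    simp only [saitoMatrix_apply_inr_one]
    exact euler (by simp [IsBalancedWeight, yzEulerWeight, mul_comm])

end

end BinomialFreeDivisor

theorem stmt_14_general {K : Type*} [Field K] [CharZero K] {n : ℕ}
    (a b : Fin n → ℕ)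
    (α β : ℕ) (hα : 0 < α) (hβ : 0 < β)
    (u t : ℕ)
    (F : MvPolynomial (Fin n ⊕ Fin 2) K)
    (hF : F = (∏ i : Fin n, X (Sum.inl i)) * X (Sum.inr 0) ^ u *
        X (Sum.inr 1) ^ t *
        ((∏ i : Fin n, X (Sum.inl i) ^ a i) * X (Sum.inr 0) ^ α +
         (∏ i : Fin n, X (Sum.inl i) ^ b i) * X (Sum.inr 1) ^ β)) :
    ∃ A : Matrix (Fin n ⊕ Fin 2) (Fin n ⊕ Fin 2)
        (MvPolynomial (Fin n ⊕ Fin 2) K),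
      A.det = F ∧ ∀ j, (∑ i, pderiv i F * A i j) ∈ Ideal.span {F} := by
  obtain rfl : F = binomialDivisor a b α β u t := by
    rw [hF, binomialDivisor, binomialCore]
    ring
  exact ⟨saitoMatrix a b α β u t, det_saitoMatrix a b α β u t hα hβ,
    sum_pderiv_mul_saitoMatrix_mem_span a b α β u t⟩

/-- the binomial
`F = x_1⋯x_n · y^u · z^t · (x^a y^α + x^b z^β)` with `min(a_i,b_i) = 0`,
`α, β > 0`, `u, t ∈ {0,1}`, reduced, is a free divisor. Here the `x`-variables
are indexed by `Sum.inl`, and `y = X (Sum.inr 0)`, `z = X (Sum.inr 1)`. -/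
theorem stmt_14 {K : Type*} [Field K] [CharZero K] {n : ℕ}
    (a b : Fin n → ℕ) (hab : ∀ i, min (a i) (b i) = 0)
    (α β : ℕ) (hα : 0 < α) (hβ : 0 < β)
    (u t : ℕ) (hu : u ≤ 1) (ht : t ≤ 1)
    (F : MvPolynomial (Fin n ⊕ Fin 2) K)
    (hF : F = (∏ i : Fin n, X (Sum.inl i)) * X (Sum.inr 0) ^ u *
        X (Sum.inr 1) ^ t *
        ((∏ i : Fin n, X (Sum.inl i) ^ a i) * X (Sum.inr 0) ^ α +
         (∏ i : Fin n, X (Sum.inl i) ^ b i) * X (Sum.inr 1) ^ β))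
    (hred : Squarefree F) :
    ∃ A : Matrix (Fin n ⊕ Fin 2) (Fin n ⊕ Fin 2)
        (MvPolynomial (Fin n ⊕ Fin 2) K),
      A.det = F ∧ ∀ j, (∑ i, pderiv i F * A i j) ∈ Ideal.span {F} :=
  stmt_14_general a b α β hα hβ u t F hF
end

section
/- Let F = x^a y^α z^β + x^b be a homogeneous reduced polynomial in K[x_1,...,x_n,y,z] with α, β > 0 and deg(x^a) + α + β = deg(x^b). Then F is NOT a free divisor: its Jacobian ideal J(F) is not perfect of codimension 2. -/
/-!
A Saito matrix `A` (`det A = F`, columns logarithmic along `F`) makes the module of logarithmic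
vector fields free. Indeed, `F` divides the determinant of every matrix with logarithmic columns:
modulo a prime factor `p` of the reduced `F`, the gradient of `p` is a nonzero left kernel vector.
So Cramer's rule solves `A W = s` for every logarithmic `s`, and this forces the colon-ideal
property `(J(F) : (y, z)) = J(F)` whenever `y` and `(y, z)` are prime, `y ∤ z` and `F ∉ (y, z)`.
For `F = x^a y^α z^β + x^b` the monomial `g = x^a y^(α-1) z^(β-1)` has `y g` and `z g`
proportional to `∂F/∂z` and `∂F/∂y`. However, `g ∉ J(F)`, because `J(F)` is generated in degrees
`≥ deg F - 1 > deg g`.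
-/

open MvPolynomial Matrix

theorem Squarefree.dvd_of_forall_prime_dvd {α : Type*} [CommMonoidWithZero α]
    [UniqueFactorizationMonoid α] {F D : α} (hF : Squarefree F)
    (h : ∀ p, Prime p → p ∣ F → p ∣ D) : F ∣ D := by
  induction F using UniqueFactorizationMonoid.induction_on_prime with
  | h₁ => exact (hF 0 (dvd_zero _)).dvd
  | h₂ u hu => exact hu.dvd
  | h₃ a p _ hp ih =>
    exact (IsRelPrime.of_squarefree_mul hF).mul_dvd (h p hp (dvd_mul_right p a))
      (ih hF.of_mul_right fun q hq hqa => h q hq (dvd_mul_of_dvd_right hqa p))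

theorem Matrix.mem_of_forall_mulVec_mem {n R : Type*} [Fintype n] [DecidableEq n] [CommRing R]
    {I : Ideal R} [I.IsPrime] {A : Matrix n n R} (hA : A.det ∉ I) {W : n → R}
    (hW : ∀ v, (A *ᵥ W) v ∈ I) (k : n) : W k ∈ I := by
  have h : (A.adjugate *ᵥ (A *ᵥ W)) k = A.det * W k := by
    rw [mulVec_mulVec, adjugate_mul, smul_mulVec, one_mulVec, Pi.smul_apply, smul_eq_mul]
  have hmem : (A.adjugate *ᵥ (A *ᵥ W)) k ∈ I :=
    Ideal.sum_mem _ fun v _ => Ideal.mul_mem_left _ _ (hW v)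
  exact (‹I.IsPrime›.mem_or_mem (h ▸ hmem)).resolve_left hA

noncomputable section

namespace MvPolynomial

variable {σ R : Type*} [CommRing R]

def gradient (F : MvPolynomial σ R) : σ → MvPolynomial σ R := fun v => pderiv v F

def jacobianIdeal (F : MvPolynomial σ R) : Ideal (MvPolynomial σ R) :=
  Ideal.span (insert F (Set.range (gradient F)))

theorem gradient_mul (f g : MvPolynomial σ R) :
    gradient (f * g) = g • gradient f + f • gradient g := by
  ext1 v
  simp only [gradient, pderiv_mul, Pi.add_apply, Pi.smul_apply, smul_eq_mul, mul_comm g]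

theorem mem_jacobianIdeal_iff [Fintype σ] {F g : MvPolynomial σ R} :
    g ∈ jacobianIdeal F ↔ ∃ t u, t * F + gradient F ⬝ᵥ u = g := by
  simp only [jacobianIdeal, Ideal.mem_span_insert, Ideal.mem_span_range_iff_exists_fun,
    dotProduct, mul_comm (gradient F _)]
  constructor
  · rintro ⟨t, _, ⟨u, rfl⟩, rfl⟩
    exact ⟨t, u, rfl⟩
  · rintro ⟨t, u, rfl⟩
    exact ⟨t, _, ⟨u, rfl⟩, rfl⟩

theorem pderiv_mem_jacobianIdeal (F : MvPolynomial σ R) (v : σ) :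
    pderiv v F ∈ jacobianIdeal F :=
  Ideal.subset_span (Set.mem_insert_of_mem _ ⟨v, rfl⟩)

theorem not_dvd_pderiv_of_mem_vars [IsDomain R] [CharZero R] {p : MvPolynomial σ R} {v : σ}
    (hv : v ∈ p.vars) : ¬ p ∣ pderiv v p := by
  obtain ⟨m, hm, hmv⟩ := (mem_vars_iff_mem_support v).mp hv
  rw [Finsupp.mem_support_iff] at hmv
  have hle : Finsupp.single v 1 ≤ m := Finsupp.single_le_iff.mpr (Nat.one_le_iff_ne_zero.mpr hmv)
  have hpos : 0 < p.degreeOf v := (Nat.pos_of_ne_zero hmv).trans_le (monomial_le_degreeOf v hm)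
  have hne : pderiv v p ≠ 0 := by
    refine MvPolynomial.ne_zero_iff.mpr ⟨m - Finsupp.single v 1, ?_⟩
    rw [coeff_pderiv, tsub_add_cancel_of_le hle]
    exact mul_ne_zero (mem_support_iff.mp hm) (Nat.cast_add_one_ne_zero _)
  have hlt : (pderiv v p).degreeOf v < p.degreeOf v := by
    refine (degreeOf_lt_iff hpos).mpr fun m' hm' => ?_
    rw [mem_support_iff, coeff_pderiv] at hm'
    have := monomial_le_degreeOf v (mem_support_iff.mpr (left_ne_zero_of_mul hm'))
    simp only [Finsupp.add_apply, Finsupp.single_eq_same] at this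
    omega
  rintro ⟨h, hh⟩
  have h0 : h ≠ 0 := by rintro rfl; exact hne (by rw [hh, mul_zero])
  rw [hh, degreeOf_mul_eq (ne_zero_of_degreeOf_ne_zero hpos.ne') h0] at hlt
  omega

theorem vars_nonempty_of_prime {K : Type*} [Field K] {p : MvPolynomial σ K} (hp : Prime p) :
    p.vars.Nonempty := by
  rw [Finset.nonempty_iff_ne_empty, Ne, vars_eq_empty_iff_eq_C]
  intro h
  refine hp.not_isUnit (h ▸ (isUnit_iff_ne_zero.mpr fun h0 => hp.ne_zero ?_).map C)
  rw [h, h0, map_zero]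

theorem ker_aeval_eq_span_X_image (s : Set σ) [DecidablePred (· ∈ s)] :
    RingHom.ker (aeval fun v => if v ∈ s then 0 else (X v : MvPolynomial σ R)) =
      Ideal.span (X '' s : Set (MvPolynomial σ R)) := by
  set I : Ideal (MvPolynomial σ R) := Ideal.span (X '' s)
  have hmk : (Ideal.Quotient.mkₐ R I).comp (aeval fun v => if v ∈ s then 0 else X v) =
      Ideal.Quotient.mkₐ R I := by
    ext v
    by_cases hv : v ∈ s
    · simpa [hv, I, eq_comm (a := (0 : _ ⧸ _)), Ideal.Quotient.eq_zero_iff_mem] using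
        Ideal.subset_span (Set.mem_image_of_mem (X (R := R)) hv)
    · simp [hv]
  apply le_antisymm
  · intro p hp
    rw [← Ideal.Quotient.eq_zero_iff_mem, ← Ideal.Quotient.mkₐ_eq_mk R, ← hmk,
      AlgHom.comp_apply, RingHom.mem_ker.mp hp, map_zero]
  · rw [Ideal.span_le]
    rintro _ ⟨v, hv, rfl⟩
    simp [hv]

theorem isPrime_span_X_image [IsDomain R] (s : Set σ) :
    (Ideal.span (X '' s : Set (MvPolynomial σ R))).IsPrime := by
  classical
  rw [← ker_aeval_eq_span_X_image]
  exact RingHom.ker_isPrime _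

theorem pderiv_prod_X_pow_of_ne {ι : Type*} (s : Finset ι) (e : ι → σ) (k : ι → ℕ) {v : σ}
    (hv : ∀ i ∈ s, e i ≠ v) : pderiv v (∏ i ∈ s, X (e i) ^ k i : MvPolynomial σ R) = 0 :=
  Finset.prod_induction _ (fun q => pderiv v q = 0)
    (fun p q hp hq => by rw [pderiv_mul, hp, hq, zero_mul, mul_zero, add_zero]) pderiv_one
    fun i hi => by rw [pderiv_pow, pderiv_X_of_ne (hv i hi), mul_zero]

theorem IsHomogeneous.mem_pow_idealOfVars {p : MvPolynomial σ R} {m n : ℕ}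
    (hp : p.IsHomogeneous n) (hmn : m ≤ n) : p ∈ idealOfVars σ R ^ m :=
  (mem_pow_idealOfVars_iff m p).mpr fun _ hx => hmn.trans (hp.degree_eq_sum_deg_support hx).le

theorem IsHomogeneous.notMem_pow_idealOfVars {p : MvPolynomial σ R} {n : ℕ}
    (hp : p.IsHomogeneous n) (h0 : p ≠ 0) : p ∉ idealOfVars σ R ^ (n + 1) := by
  obtain ⟨x, hx⟩ := MvPolynomial.ne_zero_iff.mp h0
  intro h
  have hdeg := (mem_pow_idealOfVars_iff _ p).mp h x (mem_support_iff.mpr hx)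
  rw [Finsupp.degree_apply, ← hp.degree_eq_sum_deg_support (mem_support_iff.mpr hx)] at hdeg
  omega

theorem jacobianIdeal_le_pow_idealOfVars {F : MvPolynomial σ R} {n : ℕ}
    (hF : F.IsHomogeneous (n + 1)) : jacobianIdeal F ≤ idealOfVars σ R ^ n := by
  rw [jacobianIdeal, Ideal.span_le, Set.insert_subset_iff]
  refine ⟨hF.mem_pow_idealOfVars n.le_succ, ?_⟩
  rintro _ ⟨v, rfl⟩
  exact hF.pderiv.mem_pow_idealOfVars le_rfl

section Saito

variable {K : Type*} [Field K] [CharZero K]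

theorem mem_jacobianIdeal_of_pderiv_eq_mul {F h : MvPolynomial σ K} {v : σ} {k : ℕ} (hk : k ≠ 0)
    (hv : pderiv v F = k * h) : h ∈ jacobianIdeal F := by
  have hunit : IsUnit (k : MvPolynomial σ K) := by
    rw [← map_natCast C]
    exact (isUnit_iff_ne_zero.mpr (Nat.cast_ne_zero.mpr hk)).map C
  exact (Ideal.unit_mul_mem_iff_mem _ hunit).mp (hv ▸ pderiv_mem_jacobianIdeal F v)

variable [Fintype σ] [DecidableEq σ]

theorem dvd_det_of_prime_of_dvd_gradient_vecMul {p : MvPolynomial σ K} (hp : Prime p)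
    (M : Matrix σ σ (MvPolynomial σ K)) (hM : ∀ j, p ∣ (gradient p ᵥ* M) j) : p ∣ M.det := by
  obtain ⟨v, hv⟩ := vars_nonempty_of_prime hp
  have := (Ideal.span_singleton_prime hp.ne_zero).mpr hp
  set π := Ideal.Quotient.mk (Ideal.span {p})
  have hπ : ∀ q, π q = 0 ↔ p ∣ q := fun q =>
    Ideal.Quotient.eq_zero_iff_mem.trans Ideal.mem_span_singleton
  rw [← hπ, RingHom.map_det]
  refine Matrix.exists_vecMul_eq_zero_iff.mp ⟨π ∘ gradient p, fun h => ?_, ?_⟩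
  · exact not_dvd_pderiv_of_mem_vars hv ((hπ _).mp (congrFun h v))
  · funext j
    exact ((RingHom.map_vecMul π M (gradient p) j).symm.trans ((hπ _).mpr (hM j)))

theorem dvd_det_of_squarefree_of_dvd_gradient_vecMul {F : MvPolynomial σ K} (hF : Squarefree F)
    (M : Matrix σ σ (MvPolynomial σ K)) (hM : ∀ j, F ∣ (gradient F ᵥ* M) j) : F ∣ M.det := by
  refine hF.dvd_of_forall_prime_dvd fun p hp ⟨g, hFg⟩ => ?_
  have hpg : ¬ p ∣ g := fun ⟨h, hh⟩ => hp.not_isUnit (hF p ⟨h, by rw [hFg, hh, mul_assoc]⟩)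
  refine dvd_det_of_prime_of_dvd_gradient_vecMul hp M fun j => ?_
  have hj := hM j
  rw [hFg, gradient_mul, Matrix.add_vecMul, Matrix.smul_vecMul, Matrix.smul_vecMul] at hj
  simp only [Pi.add_apply, Pi.smul_apply, smul_eq_mul] at hj
  have : p ∣ g * (gradient p ᵥ* M) j := (dvd_add_left (dvd_mul_right _ _)).mp
    ((dvd_mul_right p g).trans hj)
  exact (hp.dvd_mul.mp this).resolve_left hpg

theorem exists_mulVec_eq_of_dvd_gradient_dotProduct {F : MvPolynomial σ K} (hF : Squarefree F)
    {A : Matrix σ σ (MvPolynomial σ K)} (hdet : A.det = F) (hA : ∀ j, F ∣ (gradient F ᵥ* A) j)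
    {s : σ → MvPolynomial σ K} (hs : F ∣ gradient F ⬝ᵥ s) : ∃ W, A *ᵥ W = s := by
  have hcramer : ∀ k, F ∣ A.cramer s k := fun k => by
    rw [Matrix.cramer_apply]
    refine dvd_det_of_squarefree_of_dvd_gradient_vecMul hF _ fun j => ?_
    rw [Matrix.vecMul_updateCol]
    rcases eq_or_ne j k with rfl | hjk
    · rwa [Function.update_self]
    · rw [Function.update_of_ne hjk]
      exact hA j
  choose W hW using hcramer
  refine ⟨W, ?_⟩
  funext v
  refine mul_left_cancel₀ hF.ne_zero ?_
  have h := congrFun (A.mulVec_cramer s) v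
  rw [show A.cramer s = F • W from _root_.funext hW, Matrix.mulVec_smul, hdet] at h
  simpa only [Pi.smul_apply, smul_eq_mul] using h

theorem exists_forall_dvd_sub_mulVec {F : MvPolynomial σ K} (hF : Squarefree F)
    {A : Matrix σ σ (MvPolynomial σ K)} (hdet : A.det = F) (hA : ∀ j, F ∣ (gradient F ᵥ* A) j)
    {y z : MvPolynomial σ K} (hy : Prime y) (hyz : (Ideal.span {y, z}).IsPrime)
    (hzy : ¬ y ∣ z) (hFyz : F ∉ Ideal.span {y, z}) {u₁ u₂ : σ → MvPolynomial σ K}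
    (hu : F ∣ gradient F ⬝ᵥ (z • u₁ - y • u₂)) : ∃ Q, ∀ v, y ∣ u₁ v - (A *ᵥ Q) v := by
  obtain ⟨W, hW⟩ := exists_mulVec_eq_of_dvd_gradient_dotProduct hF hdet hA hu
  have hWyz : ∀ k, W k ∈ Ideal.span {y, z} := by
    refine Matrix.mem_of_forall_mulVec_mem (hdet ▸ hFyz) fun v => ?_
    rw [hW, Pi.sub_apply, Pi.smul_apply, Pi.smul_apply, smul_eq_mul, smul_eq_mul]
    exact Ideal.sub_mem _ (Ideal.mul_mem_right _ _ (Ideal.subset_span (by simp)))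
      (Ideal.mul_mem_right _ _ (Ideal.subset_span (by simp)))
  choose P Q hPQ using fun k => Ideal.mem_span_pair.mp (hWyz k)
  have hWPQ : W = y • P + z • Q := by
    funext k
    rw [← hPQ k, Pi.add_apply, Pi.smul_apply, Pi.smul_apply, smul_eq_mul, smul_eq_mul]
    ring
  refine ⟨Q, fun v => ?_⟩
  have h := congrFun hW v
  rw [hWPQ, mulVec_add, mulVec_smul, mulVec_smul] at h
  simp only [Pi.add_apply, Pi.sub_apply, Pi.smul_apply, smul_eq_mul] at h
  have : y ∣ z * (u₁ v - (A *ᵥ Q) v) := ⟨u₂ v + (A *ᵥ P) v, by linear_combination -h⟩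
  exact (hy.dvd_mul.mp this).resolve_left hzy

theorem mem_jacobianIdeal_of_mul_mem {F : MvPolynomial σ K} (hF : Squarefree F)
    {A : Matrix σ σ (MvPolynomial σ K)} (hdet : A.det = F) (hA : ∀ j, F ∣ (gradient F ᵥ* A) j)
    {y z g : MvPolynomial σ K} (hy : Prime y) (hyz : (Ideal.span {y, z}).IsPrime)
    (hzy : ¬ y ∣ z) (hFyz : F ∉ Ideal.span {y, z}) (hyg : y * g ∈ jacobianIdeal F)
    (hzg : z * g ∈ jacobianIdeal F) : g ∈ jacobianIdeal F := by
  obtain ⟨t₁, u₁, h₁⟩ := mem_jacobianIdeal_iff.mp hyg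
  obtain ⟨t₂, u₂, h₂⟩ := mem_jacobianIdeal_iff.mp hzg
  obtain ⟨Q, hQ⟩ := exists_forall_dvd_sub_mulVec hF hdet hA hy hyz hzy hFyz
    (u₁ := u₁) (u₂ := u₂) ⟨y * t₂ - z * t₁, by
      rw [dotProduct_sub, dotProduct_smul, dotProduct_smul, smul_eq_mul, smul_eq_mul]
      linear_combination z * h₁ - y * h₂⟩
  choose V hV using hQ
  choose c hc using hA
  have hcol : gradient F ᵥ* A = F • c := _root_.funext hc
  have hgrad : y * (gradient F ⬝ᵥ V) = y * g - F * (t₁ + c ⬝ᵥ Q) := by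
    have h := congrArg (gradient F ⬝ᵥ ·) (_root_.funext hV : u₁ - A *ᵥ Q = y • V)
    simp only [dotProduct_sub, dotProduct_mulVec, hcol, dotProduct_smul,
      smul_dotProduct, smul_eq_mul] at h
    linear_combination h₁ - h
  have hyF : ¬ y ∣ F := fun h =>
    hFyz (Ideal.span_mono (by simp) (Ideal.mem_span_singleton.mpr h))
  obtain ⟨S, hS⟩ : y ∣ t₁ + c ⬝ᵥ Q := by
    have : y ∣ F * (t₁ + c ⬝ᵥ Q) := ⟨g - gradient F ⬝ᵥ V, by linear_combination hgrad⟩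
    exact (hy.dvd_mul.mp this).resolve_left hyF
  refine mem_jacobianIdeal_iff.mpr ⟨S, V, mul_left_cancel₀ hy.ne_zero ?_⟩
  linear_combination hgrad - F * hS

end Saito

end MvPolynomial

end

/-- the homogeneous reduced binomial `F = x^a y^α z^β + x^b`
with `α, β > 0` (and matching degrees) is NOT a free divisor: no Saito matrix
exists for it. Here the `x`-variables are indexed by `Sum.inl`, and
`y = X (Sum.inr 0)`, `z = X (Sum.inr 1)`. -/
theorem stmt_15 {K : Type*} [Field K] [CharZero K] {n : ℕ}
    (a b : Fin n → ℕ) (α β : ℕ) (hα : 0 < α) (hβ : 0 < β)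
    (hdeg : (∑ i, a i) + α + β = ∑ i, b i)
    (F : MvPolynomial (Fin n ⊕ Fin 2) K)
    (hF : F = (∏ i : Fin n, X (Sum.inl i) ^ a i) * X (Sum.inr 0) ^ α *
        X (Sum.inr 1) ^ β + (∏ i : Fin n, X (Sum.inl i) ^ b i))
    (hred : Squarefree F) :
    ¬ ∃ A : Matrix (Fin n ⊕ Fin 2) (Fin n ⊕ Fin 2)
        (MvPolynomial (Fin n ⊕ Fin 2) K),
      A.det = F ∧ ∀ j, (∑ i, pderiv i F * A i j) ∈ Ideal.span {F} := by
  rintro ⟨A, hdet, hA⟩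
  obtain ⟨α, rfl⟩ := Nat.exists_eq_add_one.mpr hα
  obtain ⟨β, rfl⟩ := Nat.exists_eq_add_one.mpr hβ
  set y : MvPolynomial (Fin n ⊕ Fin 2) K := X (Sum.inr 0)
  set z : MvPolynomial (Fin n ⊕ Fin 2) K := X (Sum.inr 1)
  set xa : MvPolynomial (Fin n ⊕ Fin 2) K := ∏ i : Fin n, X (Sum.inl i) ^ a i
  set g := xa * y ^ α * z ^ β
  have hxa : xa.IsHomogeneous (∑ i, a i) :=
    IsHomogeneous.prod _ _ _ fun i _ => isHomogeneous_X_pow _ _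
  have hg : g.IsHomogeneous (∑ i, a i + α + β) :=
    (hxa.mul (isHomogeneous_X_pow _ _)).mul (isHomogeneous_X_pow _ _)
  have hg0 : g ≠ 0 := by simp [g, xa, y, z, Finset.prod_ne_zero_iff, X_ne_zero]
  have hFhom : F.IsHomogeneous (∑ i, a i + α + β + 1 + 1) := hF ▸ .add
    (by convert (hxa.mul (isHomogeneous_X_pow _ (α + 1))).mul (isHomogeneous_X_pow _ (β + 1))
          using 1; omega)
    (by convert IsHomogeneous.prod _ _ _ fun i _ => isHomogeneous_X_pow (Sum.inl i) (b i)
          using 1; omega)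
  have hpderiv : pderiv (Sum.inr 1) F = ((β + 1 : ℕ) : MvPolynomial _ K) * (y * g) ∧
      pderiv (Sum.inr 0) F = ((α + 1 : ℕ) : MvPolynomial _ K) * (z * g) := by
    constructor <;>
    · simp only [hF, map_add, pderiv_mul, pderiv_pow, pderiv_X_self, pderiv_X_of_ne, ne_eq,
        pderiv_prod_X_pow_of_ne, Sum.inr.injEq, reduceCtorEq, not_false_eq_true, zero_ne_one,
        one_ne_zero, implies_true, y, z, g, xa]
      push_cast
      ring
  have hyg := mem_jacobianIdeal_of_pderiv_eq_mul β.succ_ne_zero hpderiv.1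
  have hzg := mem_jacobianIdeal_of_pderiv_eq_mul α.succ_ne_zero hpderiv.2
  have hspan : Ideal.span {y, z} = Ideal.span (X '' {Sum.inr 0, Sum.inr 1}) := by
    rw [Set.image_pair]
  have hFyz : F ∉ Ideal.span {y, z} := by
    rw [hspan, ← ker_aeval_eq_span_X_image, RingHom.mem_ker, hF]
    simp [y, z, Finset.prod_ne_zero_iff, X_ne_zero]
  have hgJ : g ∈ jacobianIdeal F := mem_jacobianIdeal_of_mul_mem hred hdet
    (fun j => Ideal.mem_span_singleton.mp (hA j)) X_prime (hspan ▸ isPrime_span_X_image _)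
    (X_dvd_X.not.mpr (by simp)) hFyz hyg hzg
  exact hg.notMem_pow_idealOfVars hg0 (jacobianIdeal_le_pow_idealOfVars hFhom hgJ)
end

section
/- Let f = f_1⋯f_k ∈ R = K[x_1,...,x_n] be a squarefree free divisor and suppose there exist derivations E_1,...,E_k of R with E_j(f_i) = δ_{ij} f_i. Then E_1,...,E_k are linearly independent over R inside Der(−log f), and the R-linear map Der(−log f) → ⊕_{i=1}^k R·E_i sending D to Σ_i (D(f_i)/f_i)·E_i splits the inclusion ⊕_i R·E_i ⊆ Der(−log f); its kernel is {D ∈ Der(−log f) : D(f_i) = 0 for all i}. -/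
open MvPolynomial

namespace Derivation

variable {R A : Type*} [CommRing R] [CommRing A] [Algebra R A]

theorem finset_sum_smul_apply {ι : Type*} (s : Finset ι) (c : ι → A)
    (E : ι → Derivation R A A) (x : A) :
    (∑ j ∈ s, c j • E j) x = ∑ j ∈ s, c j * E j x := by
  rw [← coeFnAddMonoidHom_apply, map_sum, Finset.sum_apply]
  rfl

theorem finset_sum_smul_apply_of_apply_eq_ite {ι : Type*} [DecidableEq ι] {f : ι → A}
    {E : ι → Derivation R A A} (hE : ∀ j i, E j (f i) = if i = j then f i else 0)
    (s : Finset ι) (c : ι → A) (i : ι) :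
    (∑ j ∈ s, c j • E j) (f i) = if i ∈ s then c i * f i else 0 := by
  rw [finset_sum_smul_apply]
  simp only [hE, mul_ite, mul_zero, Finset.sum_ite_eq]

theorem linearIndependent_of_apply_eq_ite [NoZeroDivisors A] {ι : Type*} [DecidableEq ι]
    {f : ι → A} (hf : ∀ i, f i ≠ 0) {E : ι → Derivation R A A}
    (hE : ∀ j i, E j (f i) = if i = j then f i else 0) :
    LinearIndependent A E := by
  rw [linearIndependent_iff']
  intro s c hc i hi
  have hci : c i * f i = 0 := by
    simpa [finset_sum_smul_apply_of_apply_eq_ite hE, hi] using congrArg (· (f i)) hc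
  exact (mul_eq_zero.mp hci).resolve_right (hf i)

/-- From `D (a * b) = a * D b + b * D a` we get `a ∣ b * D a`, and `a` is coprime to `b`. -/
theorem dvd_apply_of_squarefree_mul [DecompositionMonoid A] (D : Derivation R A A) {a b : A}
    (hab : Squarefree (a * b)) (hD : a * b ∣ D (a * b)) : a ∣ D a := by
  have hlog : a ∣ b * D a := by
    have h : a ∣ a * D b + b * D a := by
      simpa [leibniz, smul_eq_mul] using (dvd_mul_right a b).trans hD
    exact (dvd_add_right (dvd_mul_right a (D b))).mp h
  exact (IsRelPrime.of_squarefree_mul hab).dvd_of_dvd_mul_left hlog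

theorem dvd_apply_of_squarefree_prod [DecompositionMonoid A] {ι : Type*} [Fintype ι]
    [DecidableEq ι] (D : Derivation R A A) {f : ι → A} (hf : Squarefree (∏ i, f i))
    (hD : (∏ i, f i) ∣ D (∏ i, f i)) (i : ι) : f i ∣ D (f i) := by
  rw [← Finset.mul_prod_erase Finset.univ f (Finset.mem_univ i)] at hf hD
  exact D.dvd_apply_of_squarefree_mul hf hD

end Derivation

theorem stmt_16_general {K : Type*} [Field K] {n k : ℕ}
    (f : Fin k → MvPolynomial (Fin n) K)
    (hred : Squarefree (∏ i, f i))
    (E : Fin k → Derivation K (MvPolynomial (Fin n) K) (MvPolynomial (Fin n) K))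
    (hE : ∀ j i, E j (f i) = if i = j then f i else 0) :
    LinearIndependent (MvPolynomial (Fin n) K) E ∧
    ∀ D : Derivation K (MvPolynomial (Fin n) K) (MvPolynomial (Fin n) K),
      D (∏ i, f i) ∈ Ideal.span {∏ i, f i} →
      ∃ c : Fin k → MvPolynomial (Fin n) K,
        (∀ i, D (f i) = c i * f i) ∧
        (∀ i, (D - ∑ j, c j • E j) (f i) = 0) := by
  have hf : ∀ i, f i ≠ 0 := fun i hi => hred.ne_zero (Finset.prod_eq_zero (Finset.mem_univ i) hi)
  refine ⟨Derivation.linearIndependent_of_apply_eq_ite hf hE, fun D hD => ?_⟩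
  choose c hc using D.dvd_apply_of_squarefree_prod hred (Ideal.mem_span_singleton.mp hD)
  refine ⟨c, fun i => (hc i).trans (mul_comm _ _), fun i => ?_⟩
  rw [Derivation.sub_apply, Derivation.finset_sum_smul_apply_of_apply_eq_ite hE,
    if_pos (Finset.mem_univ i), hc i, mul_comm, sub_self]

/-- let `f = f_1⋯f_k` be a squarefree free divisor admitting
derivations `E_1, …, E_k` with `E_j(f_i) = δ_{ij} f_i`. Then the `E_j` are
linearly independent over `R` inside `Der(−log f)`, and every logarithmic
derivation `D` for `f` decomposes as `D = ∑ c_i • E_i + D'` with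
`D(f_i) = c_i f_i` and `D'(f_i) = 0` for all `i` (the map
`D ↦ ∑ (D(f_i)/f_i) • E_i` splits the inclusion `⊕ R E_i ⊆ Der(−log f)`, with
kernel `{D : D(f_i) = 0 for all i}`). -/
theorem stmt_16 {K : Type*} [Field K] [CharZero K] {n k : ℕ}
    (f : Fin k → MvPolynomial (Fin n) K)
    (hred : Squarefree (∏ i, f i))
    (hfree : ∃ A : Matrix (Fin n) (Fin n) (MvPolynomial (Fin n) K),
      A.det = ∏ i, f i ∧
      ∀ j, (∑ i, pderiv i (∏ l, f l) * A i j) ∈ Ideal.span {∏ l, f l})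
    (E : Fin k → Derivation K (MvPolynomial (Fin n) K) (MvPolynomial (Fin n) K))
    (hE : ∀ j i, E j (f i) = if i = j then f i else 0) :
    LinearIndependent (MvPolynomial (Fin n) K) E ∧
    ∀ D : Derivation K (MvPolynomial (Fin n) K) (MvPolynomial (Fin n) K),
      D (∏ i, f i) ∈ Ideal.span {∏ i, f i} →
      ∃ c : Fin k → MvPolynomial (Fin n) K,
        (∀ i, D (f i) = c i * f i) ∧
        (∀ i, (D - ∑ j, c j • E j) (f i) = 0) :=
  stmt_16_general f hred E hE
end
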